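/- Let p be a nonzero prime ideal of O_K with absolute norm N(p) = q, and let i₀ ≥ 1 be an integer. Let P be a subset of L_{i₀}^n (the Cartesian product of n copies of L_{i₀} = τ(p^{i₀})), and let C be a q-ary (n, M, d_C)-code over the alphabet set S_{i₀-1} that contains the zero codeword. Then the minimum Euclidean distance of the packing τ(C) + P in ℝ^{mn} satisfies d_E(τ(C)+P) ≥ min{ d_E(L_{i₀-1})·√d_C , d_E(P) }. -/

import Mathlib

open scoped BigOperators
open MeasureTheory

noncomputable section

/-- The index set for `ℝ^{s+2t}`: `s` real coordinates and `t` pairs of coordinates. -/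
abbrev PackIdx (s t : ℕ) := Fin s ⊕ Fin t × Fin 2

/-- The canonical embedding `τ : K → ℝ^{s+2t}`,
`τ(α) = (ρ₁(α),…,ρ_s(α), √2·Re σ₁(α), √2·Im σ₁(α), …, √2·Re σ_t(α), √2·Im σ_t(α))`. -/
def tauEmb {K : Type*} [Field K] {s t : ℕ}
    (ρ : Fin s → (K →+* ℝ)) (σ : Fin t → (K →+* ℂ)) (α : K) :
    EuclideanSpace ℝ (PackIdx s t) :=
  (EuclideanSpace.equiv (PackIdx s t) ℝ).symm <|
    Sum.elim (fun i => ρ i α)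
      (fun p => if p.2 = (0 : Fin 2) then Real.sqrt 2 * (σ p.1 α).re
                else Real.sqrt 2 * (σ p.1 α).im)

/-- The system of `s + 2t` field embeddings `K → ℂ` determined by the data `ρ, σ`:
the real embeddings `ρᵢ` and the complex embeddings `σⱼ` together with their conjugates. -/
def embSystem {K : Type*} [Field K] {s t : ℕ}
    (ρ : Fin s → (K →+* ℝ)) (σ : Fin t → (K →+* ℂ)) : PackIdx s t → (K →+* ℂ) :=
  Sum.elim (fun i => Complex.ofRealHom.comp (ρ i))
    (fun p => if p.2 = (0 : Fin 2) then σ p.1 else (starRingEnd ℂ).comp (σ p.1))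

/-- `ρ, σ` list exactly the real embeddings and the pairs of complex-conjugate embeddings
of `K`, without repetition: the associated system of `s+2t` embeddings `K → ℂ` is a
bijective enumeration of all field embeddings `K → ℂ`. -/
def IsEmbSystem {K : Type*} [Field K] {s t : ℕ}
    (ρ : Fin s → (K →+* ℝ)) (σ : Fin t → (K →+* ℂ)) : Prop :=
  Function.Bijective (embSystem ρ σ)

/-- The minimum (infimal) Euclidean distance between two distinct points of `P`. -/
def minDist {E : Type*} [MetricSpace E] (P : Set E) : ℝ :=
  sInf {d : ℝ | ∃ x ∈ P, ∃ y ∈ P, x ≠ y ∧ dist x y = d}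

/-- The volume `V_N` of the unit ball in `ℝ^N` (with index set `ι`, `N = |ι|`). -/
def unitBallVol (ι : Type*) [Fintype ι] : ℝ :=
  (volume (Metric.ball (0 : EuclideanSpace ℝ ι) 1)).toReal

/-- The packing density
`Δ(P) = limsup_{R→∞} |P ∩ B(R)| · r^N · V_N / vol(B(R+r))`, where `r = d_E(P)/2`. -/
def packDensity {ι : Type*} [Fintype ι] (P : Set (EuclideanSpace ℝ ι)) : ℝ :=
  Filter.limsup (fun R : ℝ =>
    (Nat.card (P ∩ Metric.closedBall 0 R : Set (EuclideanSpace ℝ ι)) : ℝ) *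
      (minDist P / 2) ^ (Fintype.card ι) * unitBallVol ι /
      (volume (Metric.closedBall (0 : EuclideanSpace ℝ ι) (R + minDist P / 2))).toReal)
    Filter.atTop

/-- `L_I = τ(I)`, the image in `ℝ^{s+2t}` of an ideal `I` of the ring of integers under the
canonical embedding. -/
def idealImage {K : Type*} [Field K] [NumberField K] {s t : ℕ}
    (ρ : Fin s → (K →+* ℝ)) (σ : Fin t → (K →+* ℂ))
    (I : Ideal (NumberField.RingOfIntegers K)) : Set (EuclideanSpace ℝ (PackIdx s t)) :=
  (fun a : NumberField.RingOfIntegers K =>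
    tauEmb ρ σ (algebraMap (NumberField.RingOfIntegers K) K a)) '' (I : Set _)

/-- The coordinatewise extension `τ : K^n → ℝ^{mn}`. -/
def tauEmbN {K : Type*} [Field K] {s t : ℕ} {n : ℕ}
    (ρ : Fin s → (K →+* ℝ)) (σ : Fin t → (K →+* ℂ)) (c : Fin n → K) :
    EuclideanSpace ℝ (Fin n × PackIdx s t) :=
  (EuclideanSpace.equiv (Fin n × PackIdx s t) ℝ).symm fun p => tauEmb ρ σ (c p.1) p.2

/-- The Cartesian product `L^n ⊆ ℝ^{mn}` of `n` copies of `L ⊆ ℝ^m`. -/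
def prodSet {ι : Type*} (n : ℕ) (L : Set (EuclideanSpace ℝ ι)) :
    Set (EuclideanSpace ℝ (Fin n × ι)) :=
  {x | ∀ j : Fin n,
    ((EuclideanSpace.equiv ι ℝ).symm fun i => (EuclideanSpace.equiv (Fin n × ι) ℝ) x (j, i)) ∈ L}

/-- `S` is a valid alphabet set at level `i`: a set of `q` elements of `p^i` containing `0`
whose residues modulo `p^{i+1}` represent the `q` distinct elements of `p^i/p^{i+1}`. -/
def IsRepSet {K : Type*} [Field K] [NumberField K]
    (p : Ideal (NumberField.RingOfIntegers K)) (i q : ℕ)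
    (S : Set (NumberField.RingOfIntegers K)) : Prop :=
  S ⊆ (p ^ i : Ideal (NumberField.RingOfIntegers K)) ∧ (0 : NumberField.RingOfIntegers K) ∈ S ∧
    Nat.card S = q ∧
    (∀ x ∈ S, ∀ y ∈ S, x ≠ y → x - y ∉ (p ^ (i + 1) : Ideal (NumberField.RingOfIntegers K))) ∧
    (∀ z ∈ (p ^ i : Ideal (NumberField.RingOfIntegers K)), ∃ a ∈ S,
      z - a ∈ (p ^ (i + 1) : Ideal (NumberField.RingOfIntegers K)))

/-- Hamming distance between two words. -/
def hDist {n : ℕ} {A : Type*} (u v : Fin n → A) : ℕ := Nat.card {j : Fin n // u j ≠ v j}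

/-- The minimum Hamming distance of a code `C`. -/
def codeMinDist {n : ℕ} {A : Type*} (C : Set (Fin n → A)) : ℕ :=
  sInf {d : ℕ | ∃ u ∈ C, ∃ v ∈ C, u ≠ v ∧ hDist u v = d}

/-- `C` is an `(n, M, d)`-code over the alphabet set `S`. -/
def IsCode {A : Type*} {n : ℕ} (S : Set A) (M d : ℕ) (C : Set (Fin n → A)) : Prop :=
  (∀ c ∈ C, ∀ j, c j ∈ S) ∧ Nat.card C = M ∧ codeMinDist C = d

/-- The translate `τ(c) + P` of `P` by the embedded codeword `c`. -/
def wordTranslate {K : Type*} [Field K] [NumberField K] {s t n : ℕ}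
    (ρ : Fin s → (K →+* ℝ)) (σ : Fin t → (K →+* ℂ))
    (c : Fin n → NumberField.RingOfIntegers K)
    (P : Set (EuclideanSpace ℝ (Fin n × PackIdx s t))) :
    Set (EuclideanSpace ℝ (Fin n × PackIdx s t)) :=
  {z | ∃ x ∈ P, z = tauEmbN ρ σ (fun j => algebraMap (NumberField.RingOfIntegers K) K (c j)) + x}

/-- The concatenation `τ(C) + P = { τ(c) + p : c ∈ C, p ∈ P }`. -/
def codeTranslate {K : Type*} [Field K] [NumberField K] {s t n : ℕ}
    (ρ : Fin s → (K →+* ℝ)) (σ : Fin t → (K →+* ℂ))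
    (C : Set (Fin n → NumberField.RingOfIntegers K))
    (P : Set (EuclideanSpace ℝ (Fin n × PackIdx s t))) :
    Set (EuclideanSpace ℝ (Fin n × PackIdx s t)) :=
  {z | ∃ c ∈ C, ∃ x ∈ P,
    z = tauEmbN ρ σ (fun j => algebraMap (NumberField.RingOfIntegers K) K (c j)) + x}

/-- The concatenation `τ(𝒞) + P = { Σ_{i<ℓ} τ(cᵢ) + p : cᵢ ∈ Cᵢ, p ∈ P }` of a family of codes. -/
def famTranslate {K : Type*} [Field K] [NumberField K] {s t n ℓ : ℕ}
    (ρ : Fin s → (K →+* ℝ)) (σ : Fin t → (K →+* ℂ))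
    (C : Fin ℓ → Set (Fin n → NumberField.RingOfIntegers K))
    (P : Set (EuclideanSpace ℝ (Fin n × PackIdx s t))) :
    Set (EuclideanSpace ℝ (Fin n × PackIdx s t)) :=
  {z | ∃ c : Fin ℓ → (Fin n → NumberField.RingOfIntegers K), (∀ i, c i ∈ C i) ∧ ∃ x ∈ P,
    z = (∑ i : Fin ℓ,
      tauEmbN ρ σ (fun j => algebraMap (NumberField.RingOfIntegers K) K (c i j))) + x}


/-!
Two points `τ(c) + x`, `τ(c) + x'` of the packing with the same codeword are as far apart as
`x` and `x'` in `P`. For distinct codewords `c ≠ c'`, write `x = τ(a)`, `x' = τ(a')` with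
`a, a' ∈ (p^{i₀})^n`. In each of the at least `d_C` coordinates where `c_j ≠ c'_j`, the element
`c_j + a_j - (c'_j + a'_j)` lies in `p^{i₀-1}` and is nonzero, because `S_{i₀-1}` represents
`p^{i₀-1}/p^{i₀}` injectively; so that block of `τ(c) + x - τ(c') - x'` has norm at least
`d_E(L_{i₀-1})`, and summing the squares of the blocks gives the bound.
-/

open scoped NumberField Finset

section MinDist

variable {E : Type*} [MetricSpace E] {P : Set E}

lemma minDist_nonneg (P : Set E) : 0 ≤ minDist P :=
  Real.sInf_nonneg (by rintro d ⟨x, -, y, -, -, rfl⟩; exact dist_nonneg)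

lemma minDist_le_dist {x y : E} (hx : x ∈ P) (hy : y ∈ P) (hxy : x ≠ y) :
    minDist P ≤ dist x y :=
  csInf_le ⟨0, by rintro d ⟨x, -, y, -, -, rfl⟩; exact dist_nonneg⟩ ⟨x, hx, y, hy, hxy, rfl⟩

lemma Set.Subsingleton.minDist_eq_zero (hP : P.Subsingleton) : minDist P = 0 := by
  rw [minDist, Set.eq_empty_of_forall_notMem (s := {d : ℝ | _}), Real.sInf_empty]
  rintro d ⟨x, hx, y, hy, hxy, -⟩
  exact hxy (hP hx hy)

lemma le_minDist {a : ℝ} (hP : P.Nontrivial) (h : ∀ x ∈ P, ∀ y ∈ P, x ≠ y → a ≤ dist x y) :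
    a ≤ minDist P := by
  obtain ⟨x, hx, y, hy, hxy⟩ := hP
  refine le_csInf ⟨_, x, hx, y, hy, hxy, rfl⟩ ?_
  rintro d ⟨x, hx, y, hy, hxy, rfl⟩
  exact h x hx y hy hxy

end MinDist

section CanonicalEmbedding

variable {K : Type*} [Field K] {s t : ℕ} (ρ : Fin s → (K →+* ℝ)) (σ : Fin t → (K →+* ℂ))

lemma tauEmb_add (α β : K) : tauEmb ρ σ (α + β) = tauEmb ρ σ α + tauEmb ρ σ β := by
  ext (i | ⟨j, k⟩)
  · simp [tauEmb, EuclideanSpace.equiv]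
  · simp only [tauEmb, EuclideanSpace.equiv, map_add, Complex.add_re, Complex.add_im,
      PiLp.continuousLinearEquiv_symm_apply, Sum.elim_inr, PiLp.add_apply]
    split_ifs <;> ring

def tauEmbAddHom : K →+ EuclideanSpace ℝ (PackIdx s t) :=
  AddMonoidHom.mk' (tauEmb ρ σ) (tauEmb_add ρ σ)

lemma tauEmb_zero : tauEmb ρ σ (0 : K) = 0 :=
  (tauEmbAddHom ρ σ).map_zero

lemma tauEmb_sub (α β : K) : tauEmb ρ σ (α - β) = tauEmb ρ σ α - tauEmb ρ σ β :=
  (tauEmbAddHom ρ σ).map_sub α β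

lemma tauEmb_injective [Nonempty (PackIdx s t)] : Function.Injective (tauEmb ρ σ) := by
  refine (injective_iff_map_eq_zero (tauEmbAddHom ρ σ)).2 fun α h => ?_
  have hcoord (i : PackIdx s t) : tauEmb ρ σ α i = 0 := congrArg (· i) h
  obtain ⟨i | ⟨j, k⟩⟩ := ‹Nonempty (PackIdx s t)›
  · exact (map_eq_zero_iff _ (ρ i).injective).1 (by simpa [tauEmb] using hcoord (.inl i))
  · refine (map_eq_zero_iff _ (σ j).injective).1 (Complex.ext ?_ ?_)
    · simpa [tauEmb] using hcoord (.inr (j, 0))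
    · simpa [tauEmb] using hcoord (.inr (j, 1))

variable {n : ℕ}

lemma tauEmbN_add (c c' : Fin n → K) :
    tauEmbN ρ σ (c + c') = tauEmbN ρ σ c + tauEmbN ρ σ c' := by
  ext ⟨j, i⟩
  simp [tauEmbN, EuclideanSpace.equiv, tauEmb_add]

lemma tauEmbN_sub (c c' : Fin n → K) :
    tauEmbN ρ σ (c - c') = tauEmbN ρ σ c - tauEmbN ρ σ c' := by
  ext ⟨j, i⟩
  simp [tauEmbN, EuclideanSpace.equiv, tauEmb_sub]

lemma norm_tauEmbN_sq (c : Fin n → K) :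
    ‖tauEmbN ρ σ c‖ ^ 2 = ∑ j, ‖tauEmb ρ σ (c j)‖ ^ 2 := by
  simp only [EuclideanSpace.norm_sq_eq, Fintype.sum_prod_type]
  rfl

lemma mul_sqrt_card_le_norm_tauEmbN {c : Fin n → K} {D : Finset (Fin n)} {a : ℝ} (ha : 0 ≤ a)
    (h : ∀ j ∈ D, a ≤ ‖tauEmb ρ σ (c j)‖) : a * √(#D : ℝ) ≤ ‖tauEmbN ρ σ c‖ := by
  refine (pow_le_pow_iff_left₀ (by positivity) (norm_nonneg _) two_ne_zero).1 ?_
  calc (a * √(#D : ℝ)) ^ 2 = ∑ _j ∈ D, a ^ 2 := by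
        rw [mul_pow, Real.sq_sqrt (Nat.cast_nonneg _), Finset.sum_const, nsmul_eq_mul, mul_comm]
    _ ≤ ∑ j ∈ D, ‖tauEmb ρ σ (c j)‖ ^ 2 := Finset.sum_le_sum fun j hj => by gcongr; exact h j hj
    _ ≤ ∑ j, ‖tauEmb ρ σ (c j)‖ ^ 2 :=
        Finset.sum_le_sum_of_subset_of_nonneg D.subset_univ fun _ _ _ => by positivity
    _ = ‖tauEmbN ρ σ c‖ ^ 2 := (norm_tauEmbN_sq ρ σ c).symm

end CanonicalEmbedding

lemma codeMinDist_le_card_filter_ne {n : ℕ} {A : Type*} [DecidableEq A] {C : Set (Fin n → A)}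
    {u v : Fin n → A} (hu : u ∈ C) (hv : v ∈ C) (huv : u ≠ v) :
    codeMinDist C ≤ #{j | u j ≠ v j} := by
  refine Nat.sInf_le ⟨u, hu, v, hv, huv, ?_⟩
  rw [hDist, Nat.card_eq_fintype_card, Fintype.card_subtype]

section IdealLattice

open NumberField

variable {K : Type*} [Field K] [NumberField K] {s t : ℕ}
  (ρ : Fin s → (K →+* ℝ)) (σ : Fin t → (K →+* ℂ))

lemma minDist_idealImage_le_norm {I : Ideal (𝓞 K)} {β : 𝓞 K} (hβ : β ∈ I) (hβ0 : β ≠ 0) :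
    minDist (idealImage ρ σ I) ≤ ‖tauEmb ρ σ (algebraMap (𝓞 K) K β)‖ := by
  rcases isEmpty_or_nonempty (PackIdx s t) with hι | hι
  -- with no coordinates `τ` is not injective, but then `idealImage ρ σ I` is a single point
  · have hsub : (idealImage ρ σ I).Subsingleton := fun x _ y _ => by
      ext i
      exact isEmptyElim i
    rw [hsub.minDist_eq_zero]
    exact norm_nonneg _
  · have h0 : (0 : EuclideanSpace ℝ (PackIdx s t)) ∈ idealImage ρ σ I :=
      ⟨0, I.zero_mem, by simp [tauEmb_zero]⟩
    have hτ0 : tauEmb ρ σ (algebraMap (𝓞 K) K β) ≠ 0 := by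
      rw [← tauEmb_zero ρ σ]
      exact (tauEmb_injective ρ σ).ne (RingOfIntegers.coe_ne_zero_iff.2 hβ0)
    rw [← dist_zero_right]
    exact minDist_le_dist ⟨β, hβ, rfl⟩ h0 hτ0

lemma exists_eq_tauEmbN_of_mem_prodSet {n : ℕ} {I : Ideal (𝓞 K)}
    {x : EuclideanSpace ℝ (Fin n × PackIdx s t)} (hx : x ∈ prodSet n (idealImage ρ σ I)) :
    ∃ a : Fin n → 𝓞 K, (∀ j, a j ∈ I) ∧ tauEmbN ρ σ (fun j => algebraMap (𝓞 K) K (a j)) = x := by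
  choose a ha hax using hx
  refine ⟨a, ha, ?_⟩
  ext ⟨j, i⟩
  exact congrArg (· i) (hax j)

lemma IsRepSet.add_sub_add_ne_zero {p : Ideal (𝓞 K)} {i q : ℕ} {S : Set (𝓞 K)}
    (hS : IsRepSet p i q S) {x y a b : 𝓞 K} (hx : x ∈ S) (hy : y ∈ S) (hxy : x ≠ y)
    (ha : a ∈ p ^ (i + 1)) (hb : b ∈ p ^ (i + 1)) : x + a - (y + b) ≠ 0 := by
  intro h
  refine hS.2.2.2.1 x hx y hy hxy ?_
  rw [show x - y = b - a by linear_combination h]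
  exact sub_mem hb ha

theorem minDist_idealImage_mul_sqrt_le_dist_of_ne {p : Ideal (𝓞 K)} {i q M dC n : ℕ} {S : Set (𝓞 K)}
    (hS : IsRepSet p i q S) {C : Set (Fin n → 𝓞 K)} (hC : IsCode S M dC C)
    {c c' : Fin n → 𝓞 K} (hc : c ∈ C) (hc' : c' ∈ C) (hcc' : c ≠ c')
    {x x' : EuclideanSpace ℝ (Fin n × PackIdx s t)}
    (hx : x ∈ prodSet n (idealImage ρ σ (p ^ (i + 1))))
    (hx' : x' ∈ prodSet n (idealImage ρ σ (p ^ (i + 1)))) :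
    minDist (idealImage ρ σ (p ^ i)) * √(dC : ℝ) ≤
      dist (tauEmbN ρ σ (fun j => algebraMap (𝓞 K) K (c j)) + x)
        (tauEmbN ρ σ (fun j => algebraMap (𝓞 K) K (c' j)) + x') := by
  classical
  obtain ⟨a, ha, rfl⟩ := exists_eq_tauEmbN_of_mem_prodSet ρ σ hx
  obtain ⟨a', ha', rfl⟩ := exists_eq_tauEmbN_of_mem_prodSet ρ σ hx'
  set β : Fin n → 𝓞 K := fun j => c j + a j - (c' j + a' j)
  have hdist : dist (tauEmbN ρ σ (fun j => algebraMap (𝓞 K) K (c j)) +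
        tauEmbN ρ σ (fun j => algebraMap (𝓞 K) K (a j)))
      (tauEmbN ρ σ (fun j => algebraMap (𝓞 K) K (c' j)) +
        tauEmbN ρ σ (fun j => algebraMap (𝓞 K) K (a' j))) =
      ‖tauEmbN ρ σ (fun j => algebraMap (𝓞 K) K (β j))‖ := by
    rw [dist_eq_norm, ← tauEmbN_add, ← tauEmbN_add, ← tauEmbN_sub]
    simp only [β, map_add, map_sub]
    rfl
  have hβ (j : Fin n) (hj : c j ≠ c' j) :
      minDist (idealImage ρ σ (p ^ i)) ≤ ‖tauEmb ρ σ (algebraMap (𝓞 K) K (β j))‖ := by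
    have hle : p ^ (i + 1) ≤ p ^ i := Ideal.pow_le_pow_right i.le_succ
    refine minDist_idealImage_le_norm ρ σ ?_
      (hS.add_sub_add_ne_zero (hC.1 c hc j) (hC.1 c' hc' j) hj (ha j) (ha' j))
    exact sub_mem (add_mem (hS.1 (hC.1 c hc j)) (hle (ha j)))
      (add_mem (hS.1 (hC.1 c' hc' j)) (hle (ha' j)))
  have hdC : dC ≤ #{j | c j ≠ c' j} := hC.2.2 ▸ codeMinDist_le_card_filter_ne hc hc' hcc'
  calc minDist (idealImage ρ σ (p ^ i)) * √(dC : ℝ)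
      ≤ minDist (idealImage ρ σ (p ^ i)) * √(#{j | c j ≠ c' j} : ℝ) := by
        gcongr
        exact minDist_nonneg _
    _ ≤ _ := mul_sqrt_card_le_norm_tauEmbN ρ σ (minDist_nonneg _) fun j hj =>
        hβ j (Finset.mem_filter.1 hj).2
    _ = _ := hdist.symm

end IdealLattice

theorem statement4_general {K : Type*} [Field K] [NumberField K] {s t : ℕ}
    (ρ : Fin s → (K →+* ℝ)) (σ : Fin t → (K →+* ℂ))
    (p : Ideal (NumberField.RingOfIntegers K))
    (q : ℕ) (i0 : ℕ) (hi0 : 1 ≤ i0) {n : ℕ}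
    (P : Set (EuclideanSpace ℝ (Fin n × PackIdx s t)))
    (hP : P ⊆ prodSet n (idealImage ρ σ (p ^ i0)))
    (S : Set (NumberField.RingOfIntegers K)) (hS : IsRepSet p (i0 - 1) q S)
    (M dC : ℕ) (C : Set (Fin n → NumberField.RingOfIntegers K)) (hC : IsCode S M dC C)
    (h0C : (fun _ => (0 : NumberField.RingOfIntegers K)) ∈ C) :
    min (minDist (idealImage ρ σ (p ^ (i0 - 1))) * Real.sqrt (dC : ℝ)) (minDist P) ≤
      minDist (codeTranslate ρ σ C P) := by
  obtain ⟨i, rfl⟩ : ∃ i, i0 = i + 1 := ⟨i0 - 1, by omega⟩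
  rw [Nat.add_sub_cancel] at hS ⊢
  rcases P.subsingleton_or_nontrivial with hPs | ⟨x, hx, y, hy, hxy⟩
  · rw [hPs.minDist_eq_zero]
    exact (min_le_right _ _).trans (minDist_nonneg _)
  set τ0 := tauEmbN ρ σ (fun j => algebraMap (𝓞 K) K ((fun _ => 0 : Fin n → 𝓞 K) j))
  refine le_minDist ⟨τ0 + x, ⟨_, h0C, x, hx, rfl⟩, τ0 + y, ⟨_, h0C, y, hy, rfl⟩,
    fun h => hxy (add_left_cancel h)⟩ ?_
  rintro _ ⟨c, hc, x, hx, rfl⟩ _ ⟨c', hc', x', hx', rfl⟩ hne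
  by_cases hcc' : c = c'
  · subst hcc'
    rw [dist_add_left]
    exact (min_le_right _ _).trans (minDist_le_dist hx hx' fun h => hne (by rw [h]))
  · exact (min_le_left _ _).trans
      (minDist_idealImage_mul_sqrt_le_dist_of_ne ρ σ hS hC hc hc' hcc' (hP hx) (hP hx'))

/-- The minimum Euclidean distance of the packing `τ(C) + P` satisfies
`d_E(τ(C)+P) ≥ min(d_E(L_{i₀-1})·√d_C, d_E(P))`. -/
theorem statement4 {K : Type*} [Field K] [NumberField K] {s t m : ℕ}
    (ρ : Fin s → (K →+* ℝ)) (σ : Fin t → (K →+* ℂ)) (hemb : IsEmbSystem ρ σ)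
    (hm : m = s + 2 * t)
    (p : Ideal (NumberField.RingOfIntegers K)) (hp : p.IsPrime) (hp0 : p ≠ ⊥)
    (q : ℕ) (hq : Ideal.absNorm p = q) (i0 : ℕ) (hi0 : 1 ≤ i0) {n : ℕ}
    (P : Set (EuclideanSpace ℝ (Fin n × PackIdx s t)))
    (hP : P ⊆ prodSet n (idealImage ρ σ (p ^ i0)))
    (S : Set (NumberField.RingOfIntegers K)) (hS : IsRepSet p (i0 - 1) q S)
    (M dC : ℕ) (C : Set (Fin n → NumberField.RingOfIntegers K)) (hC : IsCode S M dC C)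
    (h0C : (fun _ => (0 : NumberField.RingOfIntegers K)) ∈ C) :
    min (minDist (idealImage ρ σ (p ^ (i0 - 1))) * Real.sqrt (dC : ℝ)) (minDist P) ≤
      minDist (codeTranslate ρ σ C P) :=
  statement4_general ρ σ p q i0 hi0 P hP S hS M dC C hC h0C
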